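/- Let n,a,b,c,m be positive integers and x∈ℝ. Suppose f:(-∞,0]²→ℂ^{n×a} and f':(-∞,0]²→ℂ^{c×m} are continuous and square-integrable, and h:ℝ→ℂ^{a×b}, h':ℝ→ℂ^{b×c} are continuously differentiable with h(s)→0 and h'(s)→0 as s→-∞, and assume all the integrals below converge absolutely (e.g. f,f',h,h',h'·(derivatives) suitably integrable). Then for all y,z∈(-∞,0]: ∫_{-∞}^0∫_{-∞}^0∫_{-∞}^0 f(y,ξ₁)·∂ₓ[h(ξ₁+ξ₂+x)h'(ξ₂+ξ₃+x)]·f'(ξ₃,z) dξ₃ dξ₂ dξ₁ = (∫_{-∞}^0 f(y,ξ)h(ξ+x)dξ)·(∫_{-∞}^0 h'(ξ+x)f'(ξ,z)dξ). In particular, setting y=z=0 gives the corresponding scalar-argument ('trace') identity. -/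

import Mathlib

/-!
The product `h (ξ₁ + ξ₂ + x) * h' (ξ₂ + ξ₃ + x)` depends on `x` and `ξ₂` only through `ξ₂ + x`,
so its `x`-derivative is its `ξ₂`-derivative. Integrating over `ξ₂ ≤ 0`, the fundamental theorem
of calculus and the decay of `h`, `h'` at `-∞` give `h (ξ₁ + x) * h' (ξ₃ + x)`. After exchanging
the `ξ₂`- and `ξ₃`-integrals by Fubini, the triple integral therefore separates into the product
of the two single integrals.
-/

open MeasureTheory Real Set Matrix Filter

attribute [local instance] Matrix.frobeniusNormedAddCommGroup Matrix.frobeniusNormedSpace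

theorem Filter.Tendsto.matrix_mul {α R l m n : Type*} [Fintype m] [TopologicalSpace R] [Mul R]
    [AddCommMonoid R] [ContinuousAdd R] [ContinuousMul R] {F : Filter α}
    {u : α → Matrix l m R} {v : α → Matrix m n R} {A : Matrix l m R} {B : Matrix m n R}
    (hu : Tendsto u F (nhds A)) (hv : Tendsto v F (nhds B)) :
    Tendsto (fun t => u t * v t) F (nhds (A * B)) := by
  have hmul : Continuous fun p : Matrix l m R × Matrix m n R => p.1 * p.2 :=
    continuous_fst.matrix_mul continuous_snd
  exact (hmul.tendsto (A, B)).comp (hu.prodMk_nhds hv)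

theorem integral_Iic_deriv_comp_add {E : Type*} [NormedAddCommGroup E] [NormedSpace ℝ E]
    [CompleteSpace E] {g : ℝ → E} (hg : Differentiable ℝ g) (hg_bot : Tendsto g atBot (nhds 0)) (a x : ℝ)
    (hint : IntegrableOn (fun ξ => deriv g (ξ + x)) (Iic a)) :
    ∫ ξ in Iic a, deriv g (ξ + x) = g (a + x) := by
  have hderiv : ∀ ξ ∈ Iic a, HasDerivAt (fun ξ => g (ξ + x)) (deriv g (ξ + x)) ξ :=
    fun ξ _ => (hg (ξ + x)).hasDerivAt.comp_add_const ξ x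
  have hbot : Tendsto (fun ξ => g (ξ + x)) atBot (nhds 0) :=
    hg_bot.comp (tendsto_atBot_add_const_right _ x tendsto_id)
  rw [integral_Iic_of_hasDerivAt_of_tendsto' hderiv hint hbot, sub_zero]

namespace Matrix

-- The Frobenius uniformity equals the product one only up to unfolding, so with both in scope
-- instance search fails (e.g. for `ContinuousENorm`); here only the Frobenius one is kept.
attribute [-instance] instTopologicalSpaceMatrix instUniformSpace

variable {𝕜 : Type*} [RCLike 𝕜] {l m n o p : Type*}
  [Fintype l] [Fintype m] [Fintype n] [Fintype o] [Fintype p]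

noncomputable def mulCLM : Matrix l m 𝕜 →L[ℝ] Matrix m n 𝕜 →L[ℝ] Matrix l n 𝕜 :=
  LinearMap.toContinuousLinearMap
    (LinearMap.toContinuousLinearMap.toLinearMap ∘ₗ mulLinearMap ℝ)

theorem _root_.HasDerivAt.matrix_mul {u : ℝ → Matrix l m 𝕜} {v : ℝ → Matrix m n 𝕜}
    {u' : Matrix l m 𝕜} {v' : Matrix m n 𝕜} {t : ℝ}
    (hu : HasDerivAt u u' t) (hv : HasDerivAt v v' t) :
    HasDerivAt (fun t => u t * v t) (u' * v t + u t * v') t := by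
  have hB := mulCLM.hasDerivAt_of_bilinear (fun _ => hu) (fun _ => hv)
  rw [add_comm] at hB
  exact hB

section Integral

variable {α : Type*} [MeasurableSpace α] {μ : Measure α}

theorem _root_.MeasureTheory.Integrable.matrix_const_mul (A : Matrix l m 𝕜)
    {F : α → Matrix m n 𝕜} (hF : Integrable F μ) : Integrable (fun a => A * F a) μ :=
  (mulCLM A).integrable_comp hF

theorem integral_const_mul (A : Matrix l m 𝕜) {F : α → Matrix m n 𝕜} (hF : Integrable F μ) :
    ∫ a, A * F a ∂μ = A * ∫ a, F a ∂μ :=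
  (mulCLM A).integral_comp_comm hF

theorem integral_mul_const (C : Matrix m n 𝕜) {F : α → Matrix l m 𝕜} (hF : Integrable F μ) :
    ∫ a, F a * C ∂μ = (∫ a, F a ∂μ) * C :=
  (mulCLM.flip C).integral_comp_comm hF

theorem integral_integral_integral_mul_mul_of_integral_eq_mul
    {β γ : Type*} [MeasurableSpace β] [MeasurableSpace γ] {ν : Measure β} {ρ : Measure γ}
    [SFinite μ] [SFinite ν] [SFinite ρ]
    {P : α → Matrix l m 𝕜} {Q : α → β → γ → Matrix m n 𝕜} {R : γ → Matrix n o 𝕜}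
    {U : α → Matrix m p 𝕜} {V : γ → Matrix p n 𝕜}
    (hQ : ∀ a c, Integrable (fun b => Q a b c) ν) (hQ_eq : ∀ a c, ∫ b, Q a b c ∂ν = U a * V c)
    (hPQR : Integrable (fun ξ : α × β × γ => P ξ.1 * Q ξ.1 ξ.2.1 ξ.2.2 * R ξ.2.2)
      (μ.prod (ν.prod ρ)))
    (hPU : Integrable (fun a => P a * U a) μ) (hVR : Integrable (fun c => V c * R c) ρ) :
    ∫ a, ∫ b, ∫ c, P a * Q a b c * R c ∂ρ ∂ν ∂μ = (∫ a, P a * U a ∂μ) * ∫ c, V c * R c ∂ρ := by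
  have hinner : ∀ᵐ a ∂μ,
      ∫ b, ∫ c, P a * Q a b c * R c ∂ρ ∂ν = P a * U a * ∫ c, V c * R c ∂ρ := by
    filter_upwards [hPQR.prod_right_ae] with a ha
    calc ∫ b, ∫ c, P a * Q a b c * R c ∂ρ ∂ν
        = ∫ c, ∫ b, P a * Q a b c * R c ∂ν ∂ρ := integral_integral_swap ha
      _ = ∫ c, P a * U a * (V c * R c) ∂ρ := by
        refine integral_congr_ae (Eventually.of_forall fun c => ?_)
        dsimp only
        rw [integral_mul_const _ ((hQ a c).matrix_const_mul _), integral_const_mul _ (hQ a c),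
          hQ_eq, Matrix.mul_assoc, Matrix.mul_assoc, Matrix.mul_assoc]
      _ = P a * U a * ∫ c, V c * R c ∂ρ := integral_const_mul _ hVR
  rw [integral_congr_ae hinner, integral_mul_const _ hPU]

end Integral

theorem integral_Iic_deriv_hankel_mul {h : ℝ → Matrix l m 𝕜} {h' : ℝ → Matrix m n 𝕜}
    (hh : Differentiable ℝ h) (hh' : Differentiable ℝ h')
    (hh0 : Tendsto h atBot (nhds 0)) (hh'0 : Tendsto h' atBot (nhds 0)) {s s' x : ℝ}
    (hint : IntegrableOn (fun ξ => deriv (fun x' => h (s + ξ + x') * h' (ξ + s' + x')) x)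
      (Iic 0)) :
    ∫ ξ in Iic 0, deriv (fun x' => h (s + ξ + x') * h' (ξ + s' + x')) x
      = h (s + x) * h' (s' + x) := by
  set g : ℝ → Matrix l n 𝕜 := fun t => h (s + t) * h' (s' + t)
  have hshift : ∀ ξ, deriv (fun x' => h (s + ξ + x') * h' (ξ + s' + x')) x = deriv g (ξ + x) := by
    intro ξ
    rw [← deriv_comp_const_add]
    congr 1
    funext x'
    simp only [g, add_assoc, add_left_comm ξ s']
  have hg : Differentiable ℝ g := fun t =>
    (((hh (s + t)).hasDerivAt.comp_const_add s t).matrix_mul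
      ((hh' (s' + t)).hasDerivAt.comp_const_add s' t)).differentiableAt
  have hg_bot : Tendsto g atBot (nhds 0) := by
    rw [← Matrix.zero_mul (0 : Matrix m n 𝕜)]
    exact (hh0.comp (tendsto_atBot_add_const_left _ s tendsto_id)).matrix_mul
      (hh'0.comp (tendsto_atBot_add_const_left _ s' tendsto_id))
  simp only [hshift] at hint ⊢
  rw [integral_Iic_deriv_comp_add hg hg_bot 0 x hint, zero_add]

end Matrix

theorem kernel_bracket_product_rule_general
    (n a b c m : ℕ)
    (x : ℝ)
    (f : ℝ → ℝ → Matrix (Fin n) (Fin a) ℂ) (f' : ℝ → ℝ → Matrix (Fin c) (Fin m) ℂ)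
    (h : ℝ → Matrix (Fin a) (Fin b) ℂ) (h' : ℝ → Matrix (Fin b) (Fin c) ℂ)
    (hh : ContDiff ℝ 1 h) (hh' : ContDiff ℝ 1 h')
    (hh0 : Tendsto h atBot (nhds 0)) (hh'0 : Tendsto h' atBot (nhds 0))
    -- absolute convergence of all the integrals below:
    (habs1 : ∀ y ∈ Iic (0:ℝ), ∀ z ∈ Iic (0:ℝ), @Integrable _ _ SeminormedAddGroup.toContinuousENorm _ _
      (fun ξ : ℝ × ℝ × ℝ =>
        f y ξ.1 * deriv (fun x' => h (ξ.1 + ξ.2.1 + x') * h' (ξ.2.1 + ξ.2.2 + x')) x * f' ξ.2.2 z)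
      ((volume.restrict (Iic 0)).prod ((volume.restrict (Iic 0)).prod (volume.restrict (Iic 0)))))
    (habs2 : ∀ y ∈ Iic (0:ℝ),
      @Integrable _ _ SeminormedAddGroup.toContinuousENorm _ _ (fun ξ => f y ξ * h (ξ + x)) (volume.restrict (Iic 0)))
    (habs3 : ∀ z ∈ Iic (0:ℝ),
      @Integrable _ _ SeminormedAddGroup.toContinuousENorm _ _ (fun ξ => h' (ξ + x) * f' ξ z) (volume.restrict (Iic 0)))
    (habs4 : ∀ s s' : ℝ,
      @Integrable _ _ SeminormedAddGroup.toContinuousENorm _ _ (fun ξ => deriv (fun x' => h (s + ξ + x') * h' (ξ + s' + x')) x)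
        (volume.restrict (Iic 0))) :
    ∀ y ∈ Iic (0:ℝ), ∀ z ∈ Iic (0:ℝ),
      (∫ ξ₁ in Iic (0:ℝ), ∫ ξ₂ in Iic (0:ℝ), ∫ ξ₃ in Iic (0:ℝ),
          f y ξ₁ * deriv (fun x' => h (ξ₁ + ξ₂ + x') * h' (ξ₂ + ξ₃ + x')) x * f' ξ₃ z)
        = (∫ ξ in Iic (0:ℝ), f y ξ * h (ξ + x)) * (∫ ξ in Iic (0:ℝ), h' (ξ + x) * f' ξ z) := by
  intro y hy z hz
  exact integral_integral_integral_mul_mul_of_integral_eq_mul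
    (P := fun ξ => f y ξ) (R := fun ξ => f' ξ z)
    (Q := fun ξ₁ ξ₂ ξ₃ => deriv (fun x' => h (ξ₁ + ξ₂ + x') * h' (ξ₂ + ξ₃ + x')) x)
    (U := fun ξ => h (ξ + x)) (V := fun ξ => h' (ξ + x)) habs4
    (fun _ _ => integral_Iic_deriv_hankel_mul (hh.differentiable one_ne_zero)
      (hh'.differentiable one_ne_zero) hh0 hh'0 (habs4 _ _))
    (habs1 y hy z hz) (habs2 y hy) (habs3 z hz)

/-- The kernel-bracket product rule for Hankel operators:
`[F ∂ₓ(H H') F'](y,z;x) = [F H](y,0;x) · [H' F'](0,z;x)`. -/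
theorem kernel_bracket_product_rule
    (n a b c m : ℕ) (hn : 0 < n) (ha : 0 < a) (hb : 0 < b) (hc : 0 < c) (hm : 0 < m)
    (x : ℝ)
    (f : ℝ → ℝ → Matrix (Fin n) (Fin a) ℂ) (f' : ℝ → ℝ → Matrix (Fin c) (Fin m) ℂ)
    (h : ℝ → Matrix (Fin a) (Fin b) ℂ) (h' : ℝ → Matrix (Fin b) (Fin c) ℂ)
    (hf_cont : ContinuousOn (fun yz : ℝ × ℝ => f yz.1 yz.2) (Iic 0 ×ˢ Iic 0))
    (hf'_cont : ContinuousOn (fun yz : ℝ × ℝ => f' yz.1 yz.2) (Iic 0 ×ˢ Iic 0))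
    (hf_L2 : MemLp (fun yz : ℝ × ℝ => f yz.1 yz.2) 2
      ((volume.restrict (Iic 0)).prod (volume.restrict (Iic 0))))
    (hf'_L2 : MemLp (fun yz : ℝ × ℝ => f' yz.1 yz.2) 2
      ((volume.restrict (Iic 0)).prod (volume.restrict (Iic 0))))
    (hh : ContDiff ℝ 1 h) (hh' : ContDiff ℝ 1 h')
    (hh0 : Tendsto h atBot (nhds 0)) (hh'0 : Tendsto h' atBot (nhds 0))
    -- absolute convergence of all the integrals below:
    (habs1 : ∀ y ∈ Iic (0:ℝ), ∀ z ∈ Iic (0:ℝ), @Integrable _ _ SeminormedAddGroup.toContinuousENorm _ _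
      (fun ξ : ℝ × ℝ × ℝ =>
        f y ξ.1 * deriv (fun x' => h (ξ.1 + ξ.2.1 + x') * h' (ξ.2.1 + ξ.2.2 + x')) x * f' ξ.2.2 z)
      ((volume.restrict (Iic 0)).prod ((volume.restrict (Iic 0)).prod (volume.restrict (Iic 0)))))
    (habs2 : ∀ y ∈ Iic (0:ℝ),
      @Integrable _ _ SeminormedAddGroup.toContinuousENorm _ _ (fun ξ => f y ξ * h (ξ + x)) (volume.restrict (Iic 0)))
    (habs3 : ∀ z ∈ Iic (0:ℝ),
      @Integrable _ _ SeminormedAddGroup.toContinuousENorm _ _ (fun ξ => h' (ξ + x) * f' ξ z) (volume.restrict (Iic 0)))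
    (habs4 : ∀ s s' : ℝ,
      @Integrable _ _ SeminormedAddGroup.toContinuousENorm _ _ (fun ξ => deriv (fun x' => h (s + ξ + x') * h' (ξ + s' + x')) x)
        (volume.restrict (Iic 0))) :
    ∀ y ∈ Iic (0:ℝ), ∀ z ∈ Iic (0:ℝ),
      (∫ ξ₁ in Iic (0:ℝ), ∫ ξ₂ in Iic (0:ℝ), ∫ ξ₃ in Iic (0:ℝ),
          f y ξ₁ * deriv (fun x' => h (ξ₁ + ξ₂ + x') * h' (ξ₂ + ξ₃ + x')) x * f' ξ₃ z)
        = (∫ ξ in Iic (0:ℝ), f y ξ * h (ξ + x)) * (∫ ξ in Iic (0:ℝ), h' (ξ + x) * f' ξ z) :=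
  kernel_bracket_product_rule_general n a b c m x f f' h h' hh hh' hh0 hh'0 habs1 habs2 habs3 habs4
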